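/- arXiv:2111.08789 — 3 statements merged into one kernel-verified Lean document; each statement's English description precedes it below -/
import Mathlib

section
/- The Lobachevsky function Λ(x) = −∫₀ˣ log|2 sin t| dt is concave on the interval [0, π/2]. -/
/-!
Away from the zeros of `sin`, the fundamental theorem of calculus gives `Λ' x = -log |2 sin x|`,
which is antitone on `(0, π/2)` because `sin` increases there; the logarithmic singularity at `0`
is integrable, so `Λ` is continuous up to the endpoints and hence concave on the closed interval.
-/

open Real

/-- The Lobachevsky function `Λ(x) = -∫₀ˣ log |2 sin t| dt`. -/
noncomputable def lobachevsky (x : ℝ) : ℝ :=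
  -∫ t in (0:ℝ)..x, Real.log |2 * Real.sin t|

open MeasureTheory

theorem intervalIntegrable_log_abs_two_mul_sin (a b : ℝ) :
    IntervalIntegrable (fun t => log |2 * sin t|) volume a b := by
  simp only [log_abs]
  exact (analyticOnNhd_const.mul analyticOnNhd_sin).meromorphicOn.intervalIntegrable_log

theorem continuous_lobachevsky : Continuous lobachevsky :=
  (intervalIntegral.continuous_primitive intervalIntegrable_log_abs_two_mul_sin 0).neg

theorem hasDerivAt_lobachevsky {x : ℝ} (hx : sin x ≠ 0) :
    HasDerivAt lobachevsky (-log |2 * sin x|) x := by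
  have hmeas : Measurable fun t => log |2 * sin t| := by fun_prop
  have hcont : ContinuousAt (fun t => log |2 * sin t|) x :=
    (continuous_const.mul continuous_sin).abs.continuousAt.log (by simpa using hx)
  exact (intervalIntegral.integral_hasDerivAt_right (intervalIntegrable_log_abs_two_mul_sin 0 x)
    hmeas.stronglyMeasurable.stronglyMeasurableAtFilter hcont).neg

/-- The Lobachevsky function is concave on the interval `[0, π/2]`. -/
theorem lobachevsky_concaveOn :
    ConcaveOn ℝ (Set.Icc 0 (Real.pi / 2)) lobachevsky := by
  have sin_pos {x : ℝ} (hx : x ∈ Set.Ioo 0 (π / 2)) : 0 < sin x :=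
    sin_pos_of_pos_of_lt_pi hx.1 (by linarith [hx.2, pi_pos])
  refine AntitoneOn.concaveOn_of_deriv (convex_Icc _ _) continuous_lobachevsky.continuousOn
    ?_ ?_ <;> rw [interior_Icc]
  · exact fun x hx =>
      (hasDerivAt_lobachevsky (sin_pos hx).ne').differentiableAt.differentiableWithinAt
  · intro x hx y hy hxy
    have hsin : sin x ≤ sin y :=
      sin_le_sin_of_le_of_le_pi_div_two (by linarith [hx.1, pi_pos]) hy.2.le hxy
    rw [(hasDerivAt_lobachevsky (sin_pos hx).ne').deriv,
      (hasDerivAt_lobachevsky (sin_pos hy).ne').deriv, neg_le_neg_iff,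
      abs_of_pos (by linarith [sin_pos hx]), abs_of_pos (by linarith [sin_pos hy])]
    exact log_le_log (by linarith [sin_pos hx]) (by linarith)
end

section
/- Let p : ℕ → ℕ be finitely supported with p_k = 0 for all k < 3, and let V be a natural number with V > 24 such that ∑_{k} p_k = V + 2 and ∑_{k} k·p_k = 4V. Then ∑_{k} k(k − 3)·p_k > 3V. -/
/-! The two relations give `∑ (k - 3)·p_k = 4V - 3(V + 2) = V - 6`, and `k(k - 3) ≥ 4(k - 3)`
for every `k`, so `∑ k(k - 3)·p_k ≥ 4(V - 6) > 3V` once `V > 24`. -/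

open Finset

section TruncatedSums

variable {ι : Type*} (s : Finset ι) (k p : ι → ℕ) (m : ℕ)

theorem sum_mul_le_mul_sum_add_sum_tsub_mul :
    ∑ i ∈ s, k i * p i ≤ m * ∑ i ∈ s, p i + ∑ i ∈ s, (k i - m) * p i := by
  rw [mul_sum, ← sum_add_distrib]
  refine sum_le_sum fun i _ => ?_
  rw [← add_mul]
  exact Nat.mul_le_mul_right _ le_add_tsub

theorem succ_mul_sum_tsub_mul_le :
    (m + 1) * ∑ i ∈ s, (k i - m) * p i ≤ ∑ i ∈ s, k i * (k i - m) * p i := by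
  rw [mul_sum]
  refine sum_le_sum fun i _ => ?_
  rw [← mul_assoc]
  refine Nat.mul_le_mul_right _ ?_
  rcases le_or_gt (k i) m with hle | hlt
  · simp [Nat.sub_eq_zero_of_le hle]
  · exact Nat.mul_le_mul_right _ hlt

end TruncatedSums

theorem ideal_quasi_adjacent_gt_general (p : ℕ →₀ ℕ) (V : ℕ)
    (hV : 24 < V)
    (hsum : ∑ k ∈ p.support, p k = V + 2)
    (hksum : ∑ k ∈ p.support, k * p k = 4 * V) :
    3 * V < ∑ k ∈ p.support, k * (k - 3) * p k := by
  have hexcess : V - 6 ≤ ∑ k ∈ p.support, (k - 3) * p k := by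
    have := sum_mul_le_mul_sum_add_sum_tsub_mul p.support id p 3
    simp only [id, hsum, hksum] at this
    omega
  have := succ_mul_sum_tsub_mul_le p.support id p 3
  simp only [id] at this
  omega

/-- For a finitely supported face vector `p` of an ideal right-angled hyperbolic
3-polyhedron with `V > 24` vertices (so `∑ p_k = V + 2` and `∑ k·p_k = 4V`, and
`p_k = 0` for `k < 3`), the total quasi-adjacency count satisfies
`∑ k(k − 3)·p_k > 3V`. -/
theorem ideal_quasi_adjacent_gt (p : ℕ →₀ ℕ) (h3 : ∀ k < 3, p k = 0) (V : ℕ)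
    (hV : 24 < V)
    (hsum : ∑ k ∈ p.support, p k = V + 2)
    (hksum : ∑ k ∈ p.support, k * p k = 4 * V) :
    3 * V < ∑ k ∈ p.support, k * (k - 3) * p k :=
  ideal_quasi_adjacent_gt_general p V hV hsum hksum
end

section
/- Let V∞, V_F, F be natural numbers with V∞ ≥ 1, V∞ + V_F > 15, and 2F = 2V∞ + V_F + 4, and let n : Fin F → ℕ be a function with ∑_i n(i) = 8V∞ + 3V_F. Then there exists an index i with n(i) ≥ 6. -/
/-- If a right-angled hyperbolic 3-polyhedron has `V∞ ≥ 1` ideal and `VF` finite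
vertices with `V∞ + VF > 15`, and `F` faces (so `2F = 2V∞ + VF + 4`) whose
neighbour counts `n i` sum to `8V∞ + 3VF`, then some face has at least `6`
neighbours. -/
theorem exists_face_with_six_neighbours (Vinf VF F : ℕ) (h1 : 1 ≤ Vinf)
    (h2 : 15 < Vinf + VF) (hF : 2 * F = 2 * Vinf + VF + 4)
    (n : Fin F → ℕ) (hn : ∑ i, n i = 8 * Vinf + 3 * VF) :
    ∃ i, 6 ≤ n i := by
  by_contra h
  push_neg at h
  have hle : ∑ i, n i ≤ ∑ _i : Fin F, 5 :=
    Finset.sum_le_sum fun i _ => Nat.lt_succ_iff.mp (h i)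
  simp [Finset.sum_const, Finset.card_univ] at hle
  rw [hn] at hle
  omega
end
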